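/- Let α : Fin m → ℝ and β : Fin n → ℝ be nonnegative weights with ∑_j α_j = 1 and ∑_k β_k = 1, and let p : Fin m → [0,1] and q : Fin n → [0,1]. Set u := ∑_j α_j · 2√(p_j(1−p_j)) and v := ∑_k β_k · 2√(q_k(1−q_k)). Then ∑_{j,k} α_j β_k · 2√((p_j⋆q_k)(1−(p_j⋆q_k))) ≤ u + v − u·v. (This is the statement that for BMS channels V, W, Z(V Ｓ W) ≤ Z(BEC(Z(V)) Ｓ BEC(Z(W))) = Z(V) + Z(W) − Z(V)Z(W).) -/

import Mathlib

/-- The serial-combination crossover probability `p⋆q := p(1−q) + (1−p)q`. -/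
def serial (p q : ℝ) : ℝ := p * (1 - q) + (1 - p) * q

/-- The Bhattacharyya parameter of `BSC(p)`, namely `Z(BSC(p)) := 2√(p(1−p))`. -/
noncomputable def bhat (p : ℝ) : ℝ := 2 * Real.sqrt (p * (1 - p))

/-!
With `x := 1 - 2p` one has `Z(BSC(p))² = 1 - x²`, and `1 - 2(p⋆q) = (1 - 2p)(1 - 2q)`, so
`1 - Z(p⋆q)² = (1 - Z(p)²)(1 - Z(q)²)`. For `a, b ∈ [0, 1]` the value `√(1 - (1 - a²)(1 - b²))`
is at most `a + b - ab`, the squares differing by `2ab(1 - a)(1 - b)`. Since `a + b - ab` is affine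
in each variable, averaging this pointwise bound over the product weights `α_j β_k` gives the claim.
-/

open Finset

lemma bhat_nonneg (p : ℝ) : 0 ≤ bhat p := by
  unfold bhat; positivity

lemma bhat_le_one (p : ℝ) : bhat p ≤ 1 := by
  have h : Real.sqrt (p * (1 - p)) ≤ 1 / 2 :=
    Real.sqrt_le_iff.mpr ⟨by norm_num, by nlinarith [sq_nonneg (p - 1 / 2)]⟩
  unfold bhat; linarith

lemma bhat_sq {p : ℝ} (hp : p ∈ Set.Icc (0 : ℝ) 1) : bhat p ^ 2 = 1 - (1 - 2 * p) ^ 2 := by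
  have h : 0 ≤ p * (1 - p) := mul_nonneg hp.1 (by linarith [hp.2])
  rw [bhat, mul_pow, Real.sq_sqrt h]; ring

lemma serial_mem_Icc {p q : ℝ} (hp : p ∈ Set.Icc (0 : ℝ) 1) (hq : q ∈ Set.Icc (0 : ℝ) 1) :
    serial p q ∈ Set.Icc (0 : ℝ) 1 := by
  obtain ⟨hp0, hp1⟩ := hp
  obtain ⟨hq0, hq1⟩ := hq
  constructor <;> unfold serial <;> nlinarith

lemma one_sub_two_mul_serial (p q : ℝ) :
    1 - 2 * serial p q = (1 - 2 * p) * (1 - 2 * q) := by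
  unfold serial; ring

lemma bhat_serial_sq {p q : ℝ} (hp : p ∈ Set.Icc (0 : ℝ) 1) (hq : q ∈ Set.Icc (0 : ℝ) 1) :
    bhat (serial p q) ^ 2 = 1 - (1 - bhat p ^ 2) * (1 - bhat q ^ 2) := by
  rw [bhat_sq (serial_mem_Icc hp hq), one_sub_two_mul_serial, bhat_sq hp, bhat_sq hq]; ring

lemma sqrt_one_sub_mul_le {a b : ℝ} (ha₀ : 0 ≤ a) (ha₁ : a ≤ 1) (hb₀ : 0 ≤ b) (hb₁ : b ≤ 1) :
    Real.sqrt (1 - (1 - a ^ 2) * (1 - b ^ 2)) ≤ a + b - a * b := by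
  have hsq : (a + b - a * b) ^ 2 - (1 - (1 - a ^ 2) * (1 - b ^ 2))
      = 2 * a * b * ((1 - a) * (1 - b)) := by ring
  have hgap : 0 ≤ 2 * a * b * ((1 - a) * (1 - b)) :=
    mul_nonneg (by positivity) (mul_nonneg (by linarith) (by linarith))
  refine Real.sqrt_le_iff.mpr ⟨?_, by linarith⟩
  linarith [mul_nonneg hb₀ (sub_nonneg.mpr ha₁)]

lemma bhat_serial_le {p q : ℝ} (hp : p ∈ Set.Icc (0 : ℝ) 1) (hq : q ∈ Set.Icc (0 : ℝ) 1) :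
    bhat (serial p q) ≤ bhat p + bhat q - bhat p * bhat q := by
  rw [← Real.sqrt_sq (bhat_nonneg _), bhat_serial_sq hp hq]
  exact sqrt_one_sub_mul_le (bhat_nonneg p) (bhat_le_one p) (bhat_nonneg q) (bhat_le_one q)

lemma sum_sum_mul_mul_add_sub_mul {ι κ R : Type*} [Fintype ι] [Fintype κ] [CommRing R]
    (α : ι → R) (β : κ → R) (f : ι → R) (g : κ → R) (hα : ∑ j, α j = 1) (hβ : ∑ k, β k = 1) :
    ∑ j, ∑ k, α j * β k * (f j + g k - f j * g k)
      = (∑ j, α j * f j) + (∑ k, β k * g k) - (∑ j, α j * f j) * (∑ k, β k * g k) := by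
  have hexpand : ∀ j k, α j * β k * (f j + g k - f j * g k)
      = α j * f j * β k + α j * (β k * g k) - α j * f j * (β k * g k) := fun _ _ => by ring
  simp only [hexpand, sum_add_distrib, sum_sub_distrib, ← mul_sum, ← sum_mul, hα, hβ]
  ring

/-- For BMS channels `V, W` with BSC-decompositions `∑ α_j BSC(p_j)` and `∑ β_k BSC(q_k)`,
setting `u := Z(V)` and `v := Z(W)`, one has
`Z(V Ｓ W) ≤ u + v − u·v = Z(BEC(u) Ｓ BEC(v))`. -/
theorem stmt_5 (m n : ℕ) (α : Fin m → ℝ) (β : Fin n → ℝ)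
    (hα : ∀ j, 0 ≤ α j) (hβ : ∀ k, 0 ≤ β k)
    (hαsum : ∑ j, α j = 1) (hβsum : ∑ k, β k = 1)
    (p : Fin m → ℝ) (q : Fin n → ℝ)
    (hp : ∀ j, p j ∈ Set.Icc (0 : ℝ) 1) (hq : ∀ k, q k ∈ Set.Icc (0 : ℝ) 1)
    (u v : ℝ) (hu : u = ∑ j, α j * bhat (p j)) (hv : v = ∑ k, β k * bhat (q k)) :
    ∑ j, ∑ k, α j * β k * bhat (serial (p j) (q k)) ≤ u + v - u * v := by
  calc ∑ j, ∑ k, α j * β k * bhat (serial (p j) (q k))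
      ≤ ∑ j, ∑ k, α j * β k * (bhat (p j) + bhat (q k) - bhat (p j) * bhat (q k)) := by
        gcongr with j _ k _
        · exact mul_nonneg (hα j) (hβ k)
        · exact bhat_serial_le (hp j) (hq k)
    _ = u + v - u * v := by
        rw [sum_sum_mul_mul_add_sub_mul α β _ _ hαsum hβsum, hu, hv]
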